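/- Let n ≥ 1 and m = n − 1. The map φ : Matrix (Fin n) (Fin m) ℝ → Sym(n,ℝ)/ℝ·I, φ(X) = X Xᵀ + ℝ·I, is surjective, and its fibres coincide exactly with the orbits of the right action of O(m) given by X ↦ X C⁻¹: that is, φ(X) = φ(Y) if and only if Y = X C for some C ∈ O(m). -/

import Mathlib

/-!
Every class in `Sym(n) / ℝ·I` contains `A - λ I` with `λ` the least eigenvalue of `A`; this matrix
is positive semidefinite with a nonzero kernel, so in an eigenbasis it is the Gram matrix `X Xᵀ` of
`n` vectors in `ℝ^(n-1)`. If `X Xᵀ = Y Yᵀ + t I` with `t > 0`, the right side is positive definite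
of rank `n` while the left has rank at most `n - 1`; by symmetry `t = 0`. Finally, `X Xᵀ = Y Yᵀ`
says that `Xᵀ` and `Yᵀ` preserve the same inner products, so `Xᵀ v ↦ Yᵀ v` is a well-defined
isometry on the range of `Xᵀ`, which extends to an orthogonal `C` with `Y = X C`.
-/

open Matrix

/-- The real vector space of real symmetric (self-adjoint) `n × n` matrices,
as a submodule of the matrix space. -/
abbrev SymSub (n : ℕ) : Submodule ℝ (Matrix (Fin n) (Fin n) ℝ) :=
  selfAdjoint.submodule ℝ (Matrix (Fin n) (Fin n) ℝ)

lemma one_mem_symSub (n : ℕ) : (1 : Matrix (Fin n) (Fin n) ℝ) ∈ SymSub n :=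
  IsSelfAdjoint.one _

lemma mulT_mem_symSub {n m : ℕ} (X : Matrix (Fin n) (Fin m) ℝ) : X * Xᵀ ∈ SymSub n := by
  have := Matrix.isHermitian_mul_conjTranspose_self X
  rw [Matrix.conjTranspose_eq_transpose_of_trivial] at this
  exact this

lemma conj_mem_symSub {n : ℕ} (C : Matrix (Fin n) (Fin n) ℝ) (A : SymSub n) :
    C * (A : Matrix (Fin n) (Fin n) ℝ) * Cᵀ ∈ SymSub n := by
  have := Matrix.isHermitian_mul_mul_conjTranspose C (A.2 : (A : Matrix (Fin n) (Fin n) ℝ).IsHermitian)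
  rw [Matrix.conjTranspose_eq_transpose_of_trivial] at this
  exact this

/-- The line `ℝ·I` inside the space of symmetric matrices. -/
noncomputable def lineI (n : ℕ) : Submodule ℝ (SymSub n) :=
  Submodule.span ℝ {(⟨1, one_mem_symSub n⟩ : SymSub n)}

/-- The map `φ : X ↦ X Xᵀ + ℝ·I` on `n × (n-1)` real matrices. -/
noncomputable def phi (n : ℕ) (X : Matrix (Fin n) (Fin (n - 1)) ℝ) :
    SymSub n ⧸ lineI n :=
  Submodule.Quotient.mk ⟨X * Xᵀ, mulT_mem_symSub X⟩

open scoped InnerProductSpace ComplexOrder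

theorem exists_linearIsometry_comp_eq_of_inner_eq {𝕜 V W : Type*} [RCLike 𝕜]
    [NormedAddCommGroup V] [InnerProductSpace 𝕜 V] [NormedAddCommGroup W]
    [InnerProductSpace 𝕜 W] [FiniteDimensional 𝕜 W] (f g : V →ₗ[𝕜] W)
    (h : ∀ x y, ⟪f x, f y⟫_𝕜 = ⟪g x, g y⟫_𝕜) :
    ∃ E : W →ₗᵢ[𝕜] W, E.toLinearMap ∘ₗ f = g := by
  have hnorm : ∀ x, ‖g x‖ = ‖f x‖ := fun x => by
    have := h x x
    rw [inner_self_eq_norm_sq_to_K, inner_self_eq_norm_sq_to_K] at this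
    exact (pow_left_inj₀ (norm_nonneg _) (norm_nonneg _) two_ne_zero).mp
      (by exact_mod_cast this.symm)
  have hker : LinearMap.ker f ≤ LinearMap.ker g := fun x hx => by
    rw [LinearMap.mem_ker, ← norm_eq_zero, hnorm, norm_eq_zero]
    exact hx
  let L : LinearMap.range f →ₗ[𝕜] W :=
    (LinearMap.ker f).liftQ g hker ∘ₗ f.quotKerEquivRange.symm
  have hL : ∀ x, L ⟨f x, LinearMap.mem_range_self f x⟩ = g x := fun x => by
    simp [L, LinearMap.quotKerEquivRange_symm_apply_image]
  have hLnorm : ∀ s, ‖L s‖ = ‖s‖ := by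
    rintro ⟨_, x, rfl⟩
    rw [hL, hnorm]
    rfl
  refine ⟨LinearIsometry.extend ⟨L, hLnorm⟩, LinearMap.ext fun x => ?_⟩
  exact (LinearIsometry.extend_apply _ ⟨f x, LinearMap.mem_range_self f x⟩).trans (hL x)

namespace Matrix

lemma submatrix_succAbove_mul_conjTranspose {R ι : Type*} [Semiring R] [StarRing R]
    {k : ℕ} (M : Matrix ι (Fin (k + 1)) R) (p : Fin (k + 1)) (hp : ∀ i, M i p = 0) :
    M.submatrix id p.succAbove * (M.submatrix id p.succAbove)ᴴ = M * Mᴴ := by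
  ext i j
  simp [mul_apply, Fin.sum_univ_succAbove _ p, hp]

variable {𝕜 m n : Type*} [RCLike 𝕜] [Fintype m] [DecidableEq m] [Fintype n] [DecidableEq n]

lemma inner_toEuclideanLin_conjTranspose (X : Matrix n m 𝕜) (x y : EuclideanSpace 𝕜 n) :
    ⟪toEuclideanLin Xᴴ x, toEuclideanLin Xᴴ y⟫_𝕜 = ⟪x, toEuclideanLin (X * Xᴴ) y⟫_𝕜 := by
  rw [toEuclideanLin_conjTranspose_eq_adjoint, LinearMap.adjoint_inner_left,
    ← toEuclideanLin_conjTranspose_eq_adjoint, toLpLin_mul_same, LinearMap.comp_apply]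

lemma mem_unitaryGroup_of_norm_toEuclideanLin (M : Matrix m m 𝕜)
    (h : ∀ x, ‖toEuclideanLin M x‖ = ‖x‖) : M ∈ unitaryGroup m 𝕜 := by
  rw [mem_unitaryGroup_iff']
  refine EquivLike.injective (toEuclideanCLM (n := m) (𝕜 := 𝕜)) ?_
  rw [map_mul, map_star, map_one, ContinuousLinearMap.star_eq_adjoint]
  exact (ContinuousLinearMap.norm_map_iff_adjoint_comp_self _).mp h

theorem exists_mem_unitaryGroup_of_mul_conjTranspose_eq {X Y : Matrix n m 𝕜}
    (h : X * Xᴴ = Y * Yᴴ) : ∃ C ∈ unitaryGroup m 𝕜, Y = X * C := by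
  obtain ⟨E, hE⟩ := exists_linearIsometry_comp_eq_of_inner_eq
    (toEuclideanLin Xᴴ) (toEuclideanLin Yᴴ)
    (fun x y => by rw [inner_toEuclideanLin_conjTranspose, inner_toEuclideanLin_conjTranspose, h])
  set M := toEuclideanLin.symm E.toLinearMap
  have hM : toEuclideanLin M = E.toLinearMap := toEuclideanLin.apply_symm_apply _
  have hYX : Yᴴ = M * Xᴴ :=
    toEuclideanLin.injective (by rw [toLpLin_mul_same, hM, hE])
  refine ⟨Mᴴ, ?_, ?_⟩
  · exact Unitary.star_mem (mem_unitaryGroup_of_norm_toEuclideanLin M (by simp [hM]))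
  · rw [← conjTranspose_conjTranspose Y, hYX, conjTranspose_mul, conjTranspose_conjTranspose]

omit [DecidableEq m] in
theorem nonpos_of_mul_conjTranspose_eq_add_smul_one
    (hmn : Fintype.card m < Fintype.card n) {X Y : Matrix n m 𝕜} {t : ℝ}
    (h : X * Xᴴ = Y * Yᴴ + t • 1) : t ≤ 0 := by
  by_contra! ht
  -- `Y Yᴴ + t • 1` would be positive definite, hence invertible, but `X Xᴴ` has rank `≤ card m`.
  have hunit : IsUnit (X * Xᴴ) :=
    h ▸ (PosDef.posSemidef_add (posSemidef_self_mul_conjTranspose Y) (PosDef.one.smul ht)).isUnit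
  have := (rank_of_isUnit _ hunit).symm.trans_le
    ((rank_mul_le_left X Xᴴ).trans (rank_le_card_width X))
  omega

omit [DecidableEq m] in
theorem eq_zero_of_mul_conjTranspose_eq_add_smul_one
    (hmn : Fintype.card m < Fintype.card n) {X Y : Matrix n m 𝕜} {t : ℝ}
    (h : X * Xᴴ = Y * Yᴴ + t • 1) : t = 0 := by
  have h' : Y * Yᴴ = X * Xᴴ + (-t) • 1 := by rw [h, neg_smul, add_neg_cancel_right]
  linarith [nonpos_of_mul_conjTranspose_eq_add_smul_one hmn h,
    nonpos_of_mul_conjTranspose_eq_add_smul_one hmn h']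

theorem IsHermitian.exists_mul_conjTranspose_eq_add_smul_one {k : ℕ}
    {A : Matrix (Fin (k + 1)) (Fin (k + 1)) 𝕜} (hA : A.IsHermitian) :
    ∃ (X : Matrix (Fin (k + 1)) (Fin k) 𝕜) (t : ℝ), X * Xᴴ = A + t • 1 := by
  set ev := hA.eigenvalues
  obtain ⟨p, -, hp⟩ := Finset.exists_min_image Finset.univ ev Finset.univ_nonempty
  set U := (hA.eigenvectorUnitary : Matrix (Fin (k + 1)) (Fin (k + 1)) 𝕜)
  set D := diagonal fun i => (√(ev i - ev p) : 𝕜)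
  have hD : D * Dᴴ = diagonal (RCLike.ofReal ∘ ev) + (-ev p) • 1 := by
    rw [diagonal_conjTranspose, diagonal_mul_diagonal, ← diagonal_one, ← diagonal_smul,
      diagonal_add]
    congr 1
    funext i
    simp only [Pi.star_apply, RCLike.star_def, RCLike.conj_ofReal, ← RCLike.ofReal_mul,
      Real.mul_self_sqrt (sub_nonneg.2 (hp i (Finset.mem_univ i))), map_sub, Function.comp_apply,
      Pi.smul_apply, neg_smul]
    rw [Algebra.smul_def, mul_one, sub_eq_add_neg]
  -- The column of `U D` at the least eigenvalue vanishes and can be deleted.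
  refine ⟨(U * D).submatrix id p.succAbove, -ev p, ?_⟩
  rw [submatrix_succAbove_mul_conjTranspose (U * D) p (by simp [D])]
  calc U * D * (U * D)ᴴ = U * (D * Dᴴ) * star U := by
        simp only [conjTranspose_mul, star_eq_conjTranspose, Matrix.mul_assoc]
    _ = U * diagonal (RCLike.ofReal ∘ ev) * star U + (-ev p) • (U * star U) := by
        rw [hD, Matrix.mul_add, Matrix.add_mul, Matrix.mul_smul, Matrix.mul_one, Matrix.smul_mul]
    _ = A + (-ev p) • 1 := by
        rw [Unitary.mul_star_self_of_mem hA.eigenvectorUnitary.2]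
        congr 1
        simpa using hA.spectral_theorem.symm

theorem mul_transpose_self_eq_iff_exists_orthogonal (X Y : Matrix n m ℝ) :
    X * Xᵀ = Y * Yᵀ ↔ ∃ C : Matrix m m ℝ, C * Cᵀ = 1 ∧ Y = X * C := by
  constructor
  · intro h
    obtain ⟨C, hC, rfl⟩ := exists_mem_unitaryGroup_of_mul_conjTranspose_eq (𝕜 := ℝ)
      (by simpa using h)
    exact ⟨C, by simpa [star_eq_conjTranspose] using mem_unitaryGroup_iff.mp hC, rfl⟩
  · rintro ⟨C, hC, rfl⟩
    rw [transpose_mul, Matrix.mul_assoc, ← Matrix.mul_assoc C, hC, Matrix.one_mul]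

end Matrix

theorem mk_eq_mk_iff_lineI {n : ℕ} (A B : SymSub n) :
    (Submodule.Quotient.mk A : SymSub n ⧸ lineI n) = Submodule.Quotient.mk B ↔
      ∃ t : ℝ, (A : Matrix (Fin n) (Fin n) ℝ) = B + t • 1 := by
  rw [Submodule.Quotient.eq, lineI, Submodule.mem_span_singleton]
  refine exists_congr fun t => ?_
  rw [Subtype.ext_iff, eq_comm, Submodule.coe_sub, sub_eq_iff_eq_add']
  rfl

theorem phi_eq_phi_iff {m : ℕ} (X Y : Matrix (Fin (m + 1)) (Fin m) ℝ) :
    phi (m + 1) X = phi (m + 1) Y ↔ X * Xᵀ = Y * Yᵀ := by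
  rw [phi, phi, mk_eq_mk_iff_lineI]
  constructor
  · rintro ⟨t, ht⟩
    have ht' : X * Xᴴ = Y * Yᴴ + t • 1 := by simpa using ht
    rwa [eq_zero_of_mul_conjTranspose_eq_add_smul_one (by simp) ht', zero_smul, add_zero] at ht
  · exact fun h => ⟨0, by simpa using h⟩

theorem phi_surjective (m : ℕ) : Function.Surjective (phi (m + 1)) := by
  intro q
  obtain ⟨A, rfl⟩ := Submodule.Quotient.mk_surjective (lineI (m + 1)) q
  obtain ⟨X, t, hX⟩ := IsHermitian.exists_mul_conjTranspose_eq_add_smul_one A.2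
  exact ⟨X, (mk_eq_mk_iff_lineI _ _).2 ⟨t, by simpa using hX⟩⟩

/-- For `m = n - 1`, the map `φ(X) = X Xᵀ + ℝ·I` is surjective and its fibres coincide
with the orbits of the right action `X ↦ X C⁻¹` of `O(m)`. -/
theorem stmt14 (n : ℕ) (hn : 1 ≤ n) :
    Function.Surjective (phi n) ∧
    ∀ X Y : Matrix (Fin n) (Fin (n - 1)) ℝ,
      phi n X = phi n Y ↔
        ∃ C : Matrix (Fin (n - 1)) (Fin (n - 1)) ℝ, C * Cᵀ = 1 ∧ Y = X * C := by
  obtain ⟨m, rfl⟩ : ∃ m, n = m + 1 := ⟨n - 1, by omega⟩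
  exact ⟨phi_surjective m, fun X Y =>
    (phi_eq_phi_iff X Y).trans (mul_transpose_self_eq_iff_exists_orthogonal X Y)⟩
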